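/- Let X be the full 2-simplex on vertex set {1,2,3} and let N ⊴ A be a normal subsystem such that every connecting map α^σ_τ: N_σ → N_τ (σ⊆τ) is an isomorphism. Then H^1(X,N) is trivial and the natural map H^1(X,A) → H^1(X,A/N) is a bijection. -/

import Mathlib

/-- The coboundary map `d₁ : C¹ → C²`. -/
def d1 {A : Finset ℕ → Type*} [∀ σ, Group (A σ)]
    (α : ∀ σ τ : Finset ℕ, σ ⊆ τ → (A σ →* A τ))
    (b : ∀ i j : ℕ, A {i, j}) (i j k : ℕ) : A {i, j, k} :=
  α {j, k} {i, j, k} (by simp [Finset.insert_subset_iff]) ((b j k)⁻¹) *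
    α {i, k} {i, j, k} (by simp [Finset.insert_subset_iff]) (b i k) *
    α {i, j} {i, j, k} (by simp [Finset.insert_subset_iff]) ((b i j)⁻¹)

/-- The right action of `C⁰` on `C¹`. -/
def act {A : Finset ℕ → Type*} [∀ σ, Group (A σ)]
    (α : ∀ σ τ : Finset ℕ, σ ⊆ τ → (A σ →* A τ))
    (b : ∀ i j : ℕ, A {i, j}) (a : ∀ i : ℕ, A {i}) (i j : ℕ) : A {i, j} :=
  α {j} {i, j} (by simp) ((a j)⁻¹) * b i j * α {i} {i, j} (by simp) (a i)

/-- The full 2-simplex on the vertex set `{1,2,3}`: all nonempty subsets. -/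
def TriangleComplex : Set (Finset ℕ) :=
  {σ | σ.Nonempty ∧ σ ⊆ ({1, 2, 3} : Finset ℕ)}

section
variable {A : Finset ℕ → Type*} [∀ σ, Group (A σ)]
variable (S : Set (Finset ℕ)) (α : ∀ σ τ : Finset ℕ, σ ⊆ τ → (A σ →* A τ))
variable (N : ∀ σ, Subgroup (A σ))

/-- `z ∈ Z¹(X,𝒜)`. -/
def IsCocycle (z : ∀ i j : ℕ, A {i, j}) : Prop :=
  ∀ i j k : ℕ, i < j → j < k → ({i, j, k} : Finset ℕ) ∈ S → d1 α z i j k = 1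

/-- an element of `C¹(𝒩)`. -/
def InN1 (z : ∀ i j : ℕ, A {i, j}) : Prop :=
  ∀ i j : ℕ, i < j → ({i, j} : Finset ℕ) ∈ S → z i j ∈ N {i, j}

/-- an element of `C⁰(𝒩)`. -/
def InN0 (m : ∀ i : ℕ, A {i}) : Prop :=
  ∀ i : ℕ, ({i} : Finset ℕ) ∈ S → m i ∈ N {i}

end

/-!
All data can be compared inside `A {1,2,3}`: there a `1`-cochain `z` is a cocycle iff
`z₁₃ = z₂₃ z₁₂`, and, the connecting maps being injective on `𝒩`, an element of `A {2,3}`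
that is congruent to `z₂₃` modulo `𝒩` is determined by its image in `A {1,2,3}`.
A cochain that is a cocycle modulo `𝒩` becomes a cocycle after correcting `z₂₃` by the
preimage in `N {2,3}` of `d₁ z ∈ N {1,2,3}`. Two cocycles congruent modulo `𝒩` are made equal
on the edges `{1,2}` and `{1,3}` by a `0`-cochain with values in `𝒩`; the cocycle relation
then forces equality on `{2,3}`. Triviality of `H¹(X,𝒩)` is the case of the trivial cocycle.
-/

def RestrictionsCompose {A : Finset ℕ → Type*} [∀ σ, Group (A σ)] (S : Set (Finset ℕ))
    (α : ∀ σ τ : Finset ℕ, σ ⊆ τ → (A σ →* A τ)) : Prop :=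
  ∀ (σ ρ τ : Finset ℕ) (h1 : σ ⊆ ρ) (h2 : ρ ⊆ τ), σ ∈ S → ρ ∈ S → τ ∈ S →
    ∀ x : A σ, α σ τ (h1.trans h2) x = α ρ τ h2 (α σ ρ h1 x)

def ConnectingMapsBijOn {A : Finset ℕ → Type*} [∀ σ, Group (A σ)] (S : Set (Finset ℕ))
    (α : ∀ σ τ : Finset ℕ, σ ⊆ τ → (A σ →* A τ)) (N : ∀ σ, Subgroup (A σ)) : Prop :=
  ∀ (σ τ : Finset ℕ) (h : σ ⊆ τ), σ ∈ S → τ ∈ S →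
    Set.BijOn (α σ τ h) (N σ : Set (A σ)) (N τ : Set (A τ))

theorem Set.InjOn.eq_of_inv_mul_mem {G H : Type*} [Group G] [Group H] {f : G →* H}
    {K : Subgroup G} (hf : Set.InjOn f K) {x y : G} (hxy : x⁻¹ * y ∈ K) (h : f x = f y) :
    x = y :=
  inv_mul_eq_one.mp <| hf hxy K.one_mem (by simp [h])

theorem Subgroup.Normal.inv_mul_mul_mul_mem {G : Type*} [Group G] {K : Subgroup G}
    (hK : K.Normal) {x y a b : G} (hxy : x⁻¹ * y ∈ K) (ha : a ∈ K) (hb : b ∈ K) :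
    x⁻¹ * (a * y * b) ∈ K := by
  have h : x⁻¹ * (a * y * b) = x⁻¹ * y * (y⁻¹ * a * y) * b := by group
  rw [h]
  exact mul_mem (mul_mem hxy (hK.conj_mem' a ha y)) hb

namespace TriangleComplex

theorem top_mem : ({1, 2, 3} : Finset ℕ) ∈ TriangleComplex := ⟨by simp, subset_rfl⟩

theorem mem_of_subset {σ : Finset ℕ} (hσ : σ.Nonempty) (h : σ ⊆ {1, 2, 3}) :
    σ ∈ TriangleComplex := ⟨hσ, h⟩

theorem forall_vertex_iff {P : ℕ → Prop} :
    (∀ i : ℕ, ({i} : Finset ℕ) ∈ TriangleComplex → P i) ↔ P 1 ∧ P 2 ∧ P 3 := by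
  refine ⟨fun h => ⟨h 1 (mem_of_subset (by simp) (by simp)),
    h 2 (mem_of_subset (by simp) (by simp)), h 3 (mem_of_subset (by simp) (by simp))⟩, ?_⟩
  rintro ⟨h1, h2, h3⟩ i hi
  have : i ∈ ({1, 2, 3} : Finset ℕ) := hi.2 (by simp)
  simp only [Finset.mem_insert, Finset.mem_singleton] at this
  rcases this with rfl | rfl | rfl <;> assumption

theorem forall_edge_iff {P : ℕ → ℕ → Prop} :
    (∀ i j : ℕ, i < j → ({i, j} : Finset ℕ) ∈ TriangleComplex → P i j) ↔
      P 1 2 ∧ P 1 3 ∧ P 2 3 := by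
  refine ⟨fun h => ⟨h 1 2 (by norm_num) (mem_of_subset (by simp) (by decide)),
    h 1 3 (by norm_num) (mem_of_subset (by simp) (by decide)),
    h 2 3 (by norm_num) (mem_of_subset (by simp) (by decide))⟩, ?_⟩
  rintro ⟨h12, h13, h23⟩ i j hij hmem
  have hi : i ∈ ({1, 2, 3} : Finset ℕ) := hmem.2 (by simp)
  have hj : j ∈ ({1, 2, 3} : Finset ℕ) := hmem.2 (by simp)
  simp only [Finset.mem_insert, Finset.mem_singleton] at hi hj
  obtain ⟨rfl, rfl⟩ | ⟨rfl, rfl⟩ | ⟨rfl, rfl⟩ :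
      (i = 1 ∧ j = 2) ∨ (i = 1 ∧ j = 3) ∨ (i = 2 ∧ j = 3) := by omega
  all_goals assumption

theorem forall_triangle_iff {P : ℕ → ℕ → ℕ → Prop} :
    (∀ i j k : ℕ, i < j → j < k → ({i, j, k} : Finset ℕ) ∈ TriangleComplex → P i j k) ↔
      P 1 2 3 := by
  refine ⟨fun h => h 1 2 3 (by norm_num) (by norm_num) top_mem, ?_⟩
  intro h i j k hij hjk hmem
  have hi : i ∈ ({1, 2, 3} : Finset ℕ) := hmem.2 (by simp)
  have hj : j ∈ ({1, 2, 3} : Finset ℕ) := hmem.2 (by simp)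
  have hk : k ∈ ({1, 2, 3} : Finset ℕ) := hmem.2 (by simp)
  simp only [Finset.mem_insert, Finset.mem_singleton] at hi hj hk
  obtain ⟨rfl, rfl, rfl⟩ : i = 1 ∧ j = 2 ∧ k = 3 := by omega
  exact h

end TriangleComplex

section

variable {A : Finset ℕ → Type*} [∀ σ, Group (A σ)] {α : ∀ σ τ : Finset ℕ, σ ⊆ τ → (A σ →* A τ)}
  {N : ∀ σ, Subgroup (A σ)}

def vertexCochain (a₁ : A {1}) (a₂ : A {2}) (a₃ : A {3}) : ∀ i : ℕ, A {i}
  | 1 => a₁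
  | 2 => a₂
  | 3 => a₃
  | _ => 1

def edgeCochain (z₁₂ : A {1, 2}) (z₁₃ : A {1, 3}) (z₂₃ : A {2, 3}) : ∀ i j : ℕ, A {i, j}
  | 1, 2 => z₁₂
  | 1, 3 => z₁₃
  | 2, 3 => z₂₃
  | _, _ => 1

section
variable (a₁ : A {1}) (a₂ : A {2}) (a₃ : A {3})
@[simp] theorem vertexCochain_one : vertexCochain a₁ a₂ a₃ 1 = a₁ := rfl
@[simp] theorem vertexCochain_two : vertexCochain a₁ a₂ a₃ 2 = a₂ := rfl
@[simp] theorem vertexCochain_three : vertexCochain a₁ a₂ a₃ 3 = a₃ := rfl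
end

section
variable (z₁₂ : A {1, 2}) (z₁₃ : A {1, 3}) (z₂₃ : A {2, 3})
@[simp] theorem edgeCochain_one_two : edgeCochain z₁₂ z₁₃ z₂₃ 1 2 = z₁₂ := rfl
@[simp] theorem edgeCochain_one_three : edgeCochain z₁₂ z₁₃ z₂₃ 1 3 = z₁₃ := rfl
@[simp] theorem edgeCochain_two_three : edgeCochain z₁₂ z₁₃ z₂₃ 2 3 = z₂₃ := rfl
end

theorem act_act (z : ∀ i j : ℕ, A {i, j}) (a b : ∀ i : ℕ, A {i}) :
    act α (act α z a) b = act α z (a * b) := by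
  funext i j
  simp only [act, Pi.mul_apply, mul_inv_rev, map_mul]
  group

theorem d1_eq_one_iff (z : ∀ i j : ℕ, A {i, j}) (i j k : ℕ) :
    d1 α z i j k = 1 ↔
      α {i, k} {i, j, k} (by simp [Finset.insert_subset_iff]) (z i k) =
        α {j, k} {i, j, k} (by simp) (z j k) *
          α {i, j} {i, j, k} (by simp [Finset.insert_subset_iff]) (z i j) := by
  rw [d1, map_inv, map_inv, mul_inv_eq_one, inv_mul_eq_iff_eq_mul]

theorem isCocycle_triangleComplex_iff (z : ∀ i j : ℕ, A {i, j}) :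
    IsCocycle TriangleComplex α z ↔
      α {1, 3} {1, 2, 3} (by decide) (z 1 3) =
        α {2, 3} {1, 2, 3} (by decide) (z 2 3) * α {1, 2} {1, 2, 3} (by decide) (z 1 2) :=
  TriangleComplex.forall_triangle_iff.trans (d1_eq_one_iff z 1 2 3)

theorem map_act_of_restrictionsCompose (hcomp : RestrictionsCompose TriangleComplex α)
    {i j : ℕ} (h : ({i, j} : Finset ℕ) ⊆ {1, 2, 3}) (z : ∀ i j : ℕ, A {i, j})
    (a : ∀ i : ℕ, A {i}) :
    α {i, j} {1, 2, 3} h (act α z a i j) =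
      (α {j} {1, 2, 3} (Finset.singleton_subset_iff.mpr (h (by simp))) (a j))⁻¹ *
        α {i, j} {1, 2, 3} h (z i j) *
          α {i} {1, 2, 3} (Finset.singleton_subset_iff.mpr (h (by simp))) (a i) := by
  have hmem : ({i, j} : Finset ℕ) ∈ TriangleComplex := ⟨by simp, h⟩
  have hpush (k : ℕ) (hk : k ∈ ({i, j} : Finset ℕ)) (x : A {k}) :=
    hcomp {k} {i, j} {1, 2, 3} (Finset.singleton_subset_iff.mpr hk) h
      ⟨by simp, Finset.singleton_subset_iff.mpr (h hk)⟩ hmem TriangleComplex.top_mem x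
  rw [act, map_mul, map_mul, map_inv, map_inv, hpush j (by simp), hpush i (by simp)]


theorem IsCocycle.act_triangleComplex (hcomp : RestrictionsCompose TriangleComplex α)
    {z : ∀ i j : ℕ, A {i, j}} (hz : IsCocycle TriangleComplex α z) (b : ∀ i : ℕ, A {i}) :
    IsCocycle TriangleComplex α (act α z b) := by
  rw [isCocycle_triangleComplex_iff] at hz ⊢
  rw [map_act_of_restrictionsCompose hcomp, map_act_of_restrictionsCompose hcomp,
    map_act_of_restrictionsCompose hcomp, hz]
  group

theorem exists_isCocycle_inN1_inv_mul (hiso : ConnectingMapsBijOn TriangleComplex α N)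
    {z : ∀ i j : ℕ, A {i, j}}
    (hz : ∀ i j k : ℕ, i < j → j < k → ({i, j, k} : Finset ℕ) ∈ TriangleComplex →
      d1 α z i j k ∈ N {i, j, k}) :
    ∃ z' : ∀ i j : ℕ, A {i, j}, IsCocycle TriangleComplex α z' ∧
      InN1 TriangleComplex N (fun i j => (z i j)⁻¹ * z' i j) := by
  obtain ⟨c, hcN, hc⟩ := (hiso {2, 3} {1, 2, 3} (by decide)
    (TriangleComplex.mem_of_subset (by simp) (by decide)) TriangleComplex.top_mem).surjOn
      (TriangleComplex.forall_triangle_iff.mp hz)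
  refine ⟨edgeCochain (z 1 2) (z 1 3) (z 2 3 * c), TriangleComplex.forall_triangle_iff.mpr ?_,
    TriangleComplex.forall_edge_iff.mpr ⟨by simp, by simp, by simpa using hcN⟩⟩
  simp only [d1, edgeCochain_one_two, edgeCochain_one_three, edgeCochain_two_three,
    mul_inv_rev, map_mul, map_inv]
  rw [hc, d1, map_inv, map_inv]
  group

theorem exists_inN0_eq_act_of_inN1_inv_mul (hcomp : RestrictionsCompose TriangleComplex α)
    (hnormal : ∀ σ, (N σ).Normal) (hiso : ConnectingMapsBijOn TriangleComplex α N)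
    {w z : ∀ i j : ℕ, A {i, j}} (hw : IsCocycle TriangleComplex α w)
    (hz : IsCocycle TriangleComplex α z)
    (hwz : InN1 TriangleComplex N (fun i j => (w i j)⁻¹ * z i j)) :
    ∃ m : ∀ i : ℕ, A {i}, InN0 TriangleComplex N m ∧
      ∀ i j : ℕ, i < j → ({i, j} : Finset ℕ) ∈ TriangleComplex → z i j = act α w m i j := by
  rw [isCocycle_triangleComplex_iff] at hw hz
  obtain ⟨h₁₂, h₁₃, h₂₃⟩ := TriangleComplex.forall_edge_iff.mp hwz
  have lift (k : ℕ) (σ : Finset ℕ) (hk : {k} ⊆ σ) (hσ : σ ⊆ {1, 2, 3}) {x y : A σ}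
      (hxy : x⁻¹ * y ∈ N σ) : ∃ m ∈ N {k}, α {k} σ hk m = x * y⁻¹ :=
    (hiso {k} σ hk (TriangleComplex.mem_of_subset (by simp) (hk.trans hσ))
      (TriangleComplex.mem_of_subset (Finset.singleton_nonempty k |>.mono hk) hσ)).surjOn
      ((hnormal σ).mem_comm (by simpa using inv_mem hxy))
  obtain ⟨m₂, hm₂N, hm₂⟩ := lift 2 {1, 2} (by simp) (by decide) h₁₂
  obtain ⟨m₃, hm₃N, hm₃⟩ := lift 3 {1, 3} (by simp) (by decide) h₁₃
  refine ⟨vertexCochain 1 m₂ m₃,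
    TriangleComplex.forall_vertex_iff.mpr ⟨one_mem _, hm₂N, hm₃N⟩,
    TriangleComplex.forall_edge_iff.mpr ⟨by simp [act, hm₂], by simp [act, hm₃], ?_⟩⟩
  apply (hiso {2, 3} {1, 2, 3} (by decide) (TriangleComplex.mem_of_subset (by simp) (by decide))
    TriangleComplex.top_mem).injOn.eq_of_inv_mul_mem
  · simp only [act, vertexCochain_two, vertexCochain_three, map_inv]
    have h₂₃' : (z 2 3)⁻¹ * w 2 3 ∈ N {2, 3} := by simpa using inv_mem h₂₃
    have hm (k : ℕ) (hk : {k} ⊆ ({2, 3} : Finset ℕ)) {m : A {k}} (hm : m ∈ N {k}) :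
        α {k} {2, 3} hk m ∈ N {2, 3} :=
      (hiso {k} {2, 3} hk (TriangleComplex.mem_of_subset (by simp) (hk.trans (by decide)))
        (TriangleComplex.mem_of_subset (by simp) (by decide))).mapsTo hm
    exact (hnormal _).inv_mul_mul_mul_mem h₂₃' (inv_mem (hm 3 (by simp) hm₃N))
      (hm 2 (by simp) hm₂N)
  · have push (k : ℕ) (σ : Finset ℕ) (hk : k ∈ σ) (hσ : σ ⊆ {1, 2, 3}) (m : A {k}) :=
      hcomp {k} σ {1, 2, 3} (Finset.singleton_subset_iff.mpr hk) hσ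
        (TriangleComplex.mem_of_subset (by simp) (Finset.singleton_subset_iff.mpr (hσ hk)))
        (TriangleComplex.mem_of_subset ⟨k, hk⟩ hσ) TriangleComplex.top_mem m
    rw [map_act_of_restrictionsCompose hcomp, vertexCochain_two, vertexCochain_three,
      push 3 {1, 3} (by simp) (by decide), push 2 {1, 2} (by simp) (by decide), hm₂, hm₃]
    simp only [map_mul, map_inv, hw, hz]
    group

end

/-- let `X` be the full 2-simplex on `{1,2,3}` and `𝒩 ⊴ 𝒜` a normal
subsystem all of whose connecting maps `α^σ_τ : N_σ → N_τ` are isomorphisms.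
Then `H¹(X,𝒩)` is trivial and the natural map `H¹(X,𝒜) → H¹(X,𝒜/𝒩)` is a
bijection, classes of the quotient system being represented by lifts in `𝒜`. -/
theorem H1_eq_H1_quotient_of_iso_normal_subsystem
    (A : Finset ℕ → Type*) [∀ σ, Group (A σ)]
    (α : ∀ σ τ : Finset ℕ, σ ⊆ τ → (A σ →* A τ))
    (hcomp : ∀ (σ ρ τ : Finset ℕ) (h1 : σ ⊆ ρ) (h2 : ρ ⊆ τ),
      σ ∈ TriangleComplex → ρ ∈ TriangleComplex → τ ∈ TriangleComplex →
      ∀ x : A σ, α σ τ (h1.trans h2) x = α ρ τ h2 (α σ ρ h1 x))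
    (N : ∀ σ, Subgroup (A σ)) (hnormal : ∀ σ, (N σ).Normal)
    (hiso : ∀ (σ τ : Finset ℕ) (h : σ ⊆ τ),
      σ ∈ TriangleComplex → τ ∈ TriangleComplex →
      Set.BijOn (α σ τ h) (N σ : Set (A σ)) (N τ : Set (A τ))) :
    -- `H¹(X,𝒩) = 0`: every 𝒩-valued cocycle is a coboundary of `C⁰(𝒩)`
    (∀ n : ∀ i j : ℕ, A {i, j},
      InN1 TriangleComplex N n → IsCocycle TriangleComplex α n →
      ∃ m : ∀ i : ℕ, A {i}, InN0 TriangleComplex N m ∧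
        ∀ i j : ℕ, i < j → ({i, j} : Finset ℕ) ∈ TriangleComplex →
          n i j = act α (fun _ _ => 1) m i j) ∧
    -- `κ₁ : H¹(X,𝒜) → H¹(X,𝒜/𝒩)` is surjective
    (∀ z : ∀ i j : ℕ, A {i, j},
      (∀ i j k : ℕ, i < j → j < k → ({i, j, k} : Finset ℕ) ∈ TriangleComplex →
        d1 α z i j k ∈ N {i, j, k}) →
      ∃ z' : ∀ i j : ℕ, A {i, j}, IsCocycle TriangleComplex α z' ∧
        ∀ i j : ℕ, i < j → ({i, j} : Finset ℕ) ∈ TriangleComplex →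
          (z i j)⁻¹ * z' i j ∈ N {i, j}) ∧
    -- `κ₁ : H¹(X,𝒜) → H¹(X,𝒜/𝒩)` is injective
    (∀ z z' : ∀ i j : ℕ, A {i, j},
      IsCocycle TriangleComplex α z → IsCocycle TriangleComplex α z' →
      (∃ b : ∀ i : ℕ, A {i},
        ∀ i j : ℕ, i < j → ({i, j} : Finset ℕ) ∈ TriangleComplex →
          (act α z b i j)⁻¹ * z' i j ∈ N {i, j}) →
      ∃ b : ∀ i : ℕ, A {i},
        ∀ i j : ℕ, i < j → ({i, j} : Finset ℕ) ∈ TriangleComplex →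
          z' i j = act α z b i j) := by
  refine ⟨fun n hn hn' => ?_, fun z hz => exists_isCocycle_inN1_inv_mul hiso hz, ?_⟩
  · have htriv : IsCocycle TriangleComplex α (fun _ _ => (1 : A _)) := by
      simp [IsCocycle, d1]
    exact exists_inN0_eq_act_of_inN1_inv_mul hcomp hnormal hiso htriv hn'
      (by simpa [InN1] using hn)
  · rintro z z' hz hz' ⟨b, hb⟩
    obtain ⟨m, -, hm⟩ := exists_inN0_eq_act_of_inN1_inv_mul hcomp hnormal hiso
      (hz.act_triangleComplex hcomp b) hz' hb
    exact ⟨b * m, by simpa only [act_act] using hm⟩
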